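/- arXiv:1507.06077 — 6 statements merged into one kernel-verified Lean document; each statement's English description precedes it below -/
import Mathlib

section
/- Let $J$ be an infinite set, $\lambda=(\lambda_j)_{j\in J}$ and $\chi=(d_j)_{j\in J}$ in $\mathbb{R}^J$. Suppose that for every finitely supported permutation $w$ of $J$, $\sum_{j\in J}\lambda_j(d_{w(j)}-d_j)\ge -C$ for some fixed constant $C$ (the positive energy condition for $W(A_J)$). If $m<n$ are real numbers, $r\in\mathbb{R}$, and the sets $J_m^{<r}=\{j: \lambda_j=m,\ d_j<r\}$ and $J_n^{>r}=\{j: \lambda_j=n,\ d_j>r\}$ are both nonempty, then $\{d_j: j\in J_m^{<r}\}$ and $\{d_j: j\in J_n^{>r}\}$ are bounded. -/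
open scoped BigOperators

/-- A permutation of `J` is finitely supported if it fixes all but finitely many elements. -/
def IsFinPerm {J : Type*} (w : Equiv.Perm J) : Prop := {j | w j ≠ j}.Finite

/-- A finitely supported sign function: takes values `±1` and equals `1` outside a finite set. -/
def IsSign {J : Type*} (σ : J → ℝ) : Prop :=
  (∀ j, σ j = 1 ∨ σ j = -1) ∧ {j | σ j ≠ 1}.Finite

/-- A finitely supported sign function whose support has even cardinality. -/
def IsEvenSign {J : Type*} (σ : J → ℝ) : Prop :=
  IsSign σ ∧ ∃ F : Finset J, (∀ j, σ j = -1 ↔ j ∈ F) ∧ Even F.card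

/-- The energy `λ(w⁻¹.χ - χ) = ∑ⱼ λⱼ (d_{w(j)} - dⱼ)` (a finite sum for `w` finitely
supported). -/
noncomputable def energyA {J : Type*} (lam d : J → ℝ) (w : Equiv.Perm J) : ℝ :=
  ∑ᶠ j, lam j * (d (w j) - d j)

/-- The energy `λ(σ w⁻¹.χ - χ) = ∑ⱼ λⱼ (σⱼ d_{w(j)} - dⱼ)`. -/
noncomputable def energyB {J : Type*} (lam d σ : J → ℝ) (w : Equiv.Perm J) : ℝ :=
  ∑ᶠ j, lam j * (σ j * d (w j) - d j)

/-- Positive energy condition for `W(A_J)`. -/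
def PECA {J : Type*} (lam d : J → ℝ) : Prop :=
  ∃ C : ℝ, ∀ w : Equiv.Perm J, IsFinPerm w → C ≤ energyA lam d w

/-- Positive energy condition for `W(B_J)`. -/
def PECB {J : Type*} (lam d : J → ℝ) : Prop :=
  ∃ C : ℝ, ∀ (σ : J → ℝ) (w : Equiv.Perm J), IsSign σ → IsFinPerm w → C ≤ energyB lam d σ w

/-- Positive energy condition for `W(D_J)`. -/
def PECD {J : Type*} (lam d : J → ℝ) : Prop :=
  ∃ C : ℝ, ∀ (σ : J → ℝ) (w : Equiv.Perm J), IsEvenSign σ → IsFinPerm w → C ≤ energyB lam d σ w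


/-!
Swapping `j` with `λⱼ = m`, `dⱼ < r` and `k` with `λₖ = n`, `dₖ > r` is a finitely supported
permutation of energy `-(n - m)(dₖ - dⱼ)`, so the positive energy condition gives
`dₖ - dⱼ ≤ C / (n - m)`. Fixing one `k` bounds the first set from below and fixing one `j`
bounds the second from above; `r` bounds each on the other side.
-/

lemma isFinPerm_swap {J : Type*} [DecidableEq J] (j k : J) : IsFinPerm (Equiv.swap j k) :=
  ((Set.finite_singleton k).insert j).subset fun _ hx => (Equiv.swap_apply_ne_self_iff.1 hx).2

lemma energyA_swap {J : Type*} [DecidableEq J] (lam d : J → ℝ) {j k : J} (hjk : j ≠ k) :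
    energyA lam d (Equiv.swap j k) = -((lam k - lam j) * (d k - d j)) := by
  have hsupp : (Function.support fun i => lam i * (d (Equiv.swap j k i) - d i)) ⊆
      ({j, k} : Finset J) := by
    intro x hx
    by_contra hxjk
    simp only [Finset.coe_insert, Finset.coe_singleton, Set.mem_insert_iff,
      Set.mem_singleton_iff, not_or] at hxjk
    simp [Equiv.swap_apply_of_ne_of_ne hxjk.1 hxjk.2] at hx
  rw [energyA, finsum_eq_finsetSum_of_support_subset _ hsupp, Finset.sum_pair hjk,
    Equiv.swap_apply_left, Equiv.swap_apply_right]
  ring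

lemma sub_le_div_of_energyA_swap {J : Type*} {lam d : J → ℝ} {C : ℝ}
    (hpec : ∀ w : Equiv.Perm J, IsFinPerm w → -C ≤ energyA lam d w) {j k : J}
    (hlt : lam j < lam k) : d k - d j ≤ C / (lam k - lam j) := by
  classical
  have hjk : j ≠ k := fun h => hlt.ne (congrArg lam h)
  have hswap := hpec (Equiv.swap j k) (isFinPerm_swap j k)
  rw [energyA_swap lam d hjk, neg_le_neg_iff] at hswap
  rw [le_div_iff₀ (sub_pos.2 hlt), mul_comm]
  exact hswap

theorem pecA_bounded_subsets_general (J : Type*) (lam d : J → ℝ) (C : ℝ)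
    (hpec : ∀ w : Equiv.Perm J, IsFinPerm w → -C ≤ energyA lam d w)
    (m n r : ℝ) (hmn : m < n)
    (h1 : {j | lam j = m ∧ d j < r}.Nonempty)
    (h2 : {j | lam j = n ∧ r < d j}.Nonempty) :
    (BddBelow (d '' {j | lam j = m ∧ d j < r}) ∧ BddAbove (d '' {j | lam j = m ∧ d j < r})) ∧
    (BddBelow (d '' {j | lam j = n ∧ r < d j}) ∧ BddAbove (d '' {j | lam j = n ∧ r < d j})) := by
  obtain ⟨j₀, hj₀⟩ := h1
  obtain ⟨k₀, hk₀⟩ := h2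
  have gap : ∀ j ∈ {j | lam j = m ∧ d j < r}, ∀ k ∈ {j | lam j = n ∧ r < d j},
      d k - d j ≤ C / (n - m) := by
    rintro j ⟨hjm, -⟩ k ⟨hkn, -⟩
    have := sub_le_div_of_energyA_swap hpec (j := j) (k := k) (by rwa [hjm, hkn])
    rwa [hjm, hkn] at this
  refine ⟨⟨⟨d k₀ - C / (n - m), ?_⟩, ⟨r, ?_⟩⟩, ⟨⟨r, ?_⟩, ⟨d j₀ + C / (n - m), ?_⟩⟩⟩ <;>
    rintro _ ⟨i, hi, rfl⟩
  · linarith [gap i hi k₀ hk₀]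
  · exact hi.2.le
  · exact hi.2.le
  · linarith [gap j₀ hj₀ i hi]

theorem pecA_bounded_subsets (J : Type*) [Infinite J] (lam d : J → ℝ) (C : ℝ)
    (hpec : ∀ w : Equiv.Perm J, IsFinPerm w → -C ≤ energyA lam d w)
    (m n r : ℝ) (hmn : m < n)
    (h1 : {j | lam j = m ∧ d j < r}.Nonempty)
    (h2 : {j | lam j = n ∧ r < d j}.Nonempty) :
    (BddBelow (d '' {j | lam j = m ∧ d j < r}) ∧ BddAbove (d '' {j | lam j = m ∧ d j < r})) ∧
    (BddBelow (d '' {j | lam j = n ∧ r < d j}) ∧ BddAbove (d '' {j | lam j = n ∧ r < d j})) :=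
  pecA_bounded_subsets_general J lam d C hpec m n r hmn h1 h2
end

section
/- Let $J$ be a set and $\lambda=(\lambda_j)_{j\in J},\chi=(d_j)_{j\in J}\in\mathbb{R}^J$. Then the following are equivalent: (1) for every finitely supported permutation $w$ of $J$ and every finitely supported sign function $\sigma\colon J\to\{\pm 1\}$ (equal to $+1$ outside a finite set), $\sum_j\lambda_j(\sigma_j d_{w(j)}-d_j)\ge 0$; (2) $\lambda_j d_j\le 0$ for all $j\in J$, and for all $i,j\in J$, $|\lambda_i|<|\lambda_j|$ implies $|d_i|\le|d_j|$. -/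
open scoped BigOperators

/-
For a fixed finitely supported `w`, the sign change minimising the energy is `σⱼ = -sign(λⱼ d_{w(j)})`
on a finite set `s` carrying `w`, and the minimum is `-∑_{j∈s} (λⱼ dⱼ + |λⱼ d_{w(j)}|)`. So (1) says
that these sums are never positive. Taking `w = 1`, `s = {j}` gives `λⱼ dⱼ ≤ 0`; taking `w` the
transposition of `i` and `j` then gives `(|λⱼ| - |λᵢ|)(|dⱼ| - |dᵢ|) ≥ 0`. Conversely, under (2) the
sum equals `∑ |λⱼ| |d_{w(j)}| - ∑ |λⱼ| |dⱼ|`, which is `≤ 0` by the rearrangement inequality, since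
`|d|` monovaries with `|λ|`.
-/

namespace MinimalEnergyConeB

lemma mul_eq_neg_abs_mul_abs {x y : ℝ} (h : x * y ≤ 0) : x * y = -(|x| * |y|) := by
  rw [← abs_mul, abs_of_nonpos h, neg_neg]

variable {J : Type*} (lam d : J → ℝ)

lemma energyB_eq_sum {σ : J → ℝ} {w : Equiv.Perm J} (s : Finset J)
    (hw : ∀ j, w j ≠ j → j ∈ s) (hσ : ∀ j, σ j ≠ 1 → j ∈ s) :
    energyB lam d σ w = ∑ j ∈ s, lam j * (σ j * d (w j) - d j) := by
  refine finsum_eq_sum_of_support_subset _ fun j hj => ?_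
  by_contra hjs
  have hwj : w j = j := not_not.mp (mt (hw j) hjs)
  have hσj : σ j = 1 := not_not.mp (mt (hσ j) hjs)
  simp [hwj, hσj] at hj

open Classical in
noncomputable def minimizingSign (w : Equiv.Perm J) (s : Finset J) : J → ℝ :=
  fun j => if j ∈ s ∧ 0 ≤ lam j * d (w j) then -1 else 1

lemma mem_of_minimizingSign_ne_one {w : Equiv.Perm J} {s : Finset J} {j : J}
    (hj : minimizingSign lam d w s j ≠ 1) : j ∈ s := by
  by_contra hjs
  simp [minimizingSign, hjs] at hj

lemma isSign_minimizingSign (w : Equiv.Perm J) (s : Finset J) :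
    IsSign (minimizingSign lam d w s) := by
  refine ⟨fun j => ?_, s.finite_toSet.subset fun j => mem_of_minimizingSign_ne_one lam d⟩
  unfold minimizingSign
  split_ifs <;> simp

lemma energyB_minimizingSign {w : Equiv.Perm J} {s : Finset J} (hw : ∀ j, w j ≠ j → j ∈ s) :
    energyB lam d (minimizingSign lam d w s) w = -∑ j ∈ s, (lam j * d j + |lam j * d (w j)|) := by
  rw [energyB_eq_sum lam d s hw fun j => mem_of_minimizingSign_ne_one lam d, ← Finset.sum_neg_distrib]
  refine Finset.sum_congr rfl fun j hj => ?_
  unfold minimizingSign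
  split_ifs with h
  · rw [abs_of_nonneg h.2]; ring
  · rw [abs_of_neg (lt_of_not_ge fun h' => h ⟨hj, h'⟩)]; ring

lemma neg_sum_le_energyB {σ : J → ℝ} {w : Equiv.Perm J} {s : Finset J}
    (hσ : ∀ j, σ j = 1 ∨ σ j = -1) (hws : ∀ j, w j ≠ j → j ∈ s) (hσs : ∀ j, σ j ≠ 1 → j ∈ s) :
    -∑ j ∈ s, (lam j * d j + |lam j * d (w j)|) ≤ energyB lam d σ w := by
  rw [energyB_eq_sum lam d s hws hσs, ← Finset.sum_neg_distrib]
  refine Finset.sum_le_sum fun j _ => ?_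
  have hmul : |lam j * (σ j * d (w j))| = |lam j * d (w j)| := by
    rcases hσ j with h | h <;> simp [h]
  linarith [neg_abs_le (lam j * (σ j * d (w j))), mul_sub (lam j) (σ j * d (w j)) (d j)]

lemma energyB_nonneg_iff :
    (∀ (σ : J → ℝ) (w : Equiv.Perm J), IsSign σ → IsFinPerm w → 0 ≤ energyB lam d σ w) ↔
      ∀ (w : Equiv.Perm J) (s : Finset J), (∀ j, w j ≠ j → j ∈ s) →
        ∑ j ∈ s, (lam j * d j + |lam j * d (w j)|) ≤ 0 := by
  constructor
  · intro h w s hw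
    have hfin : IsFinPerm w := s.finite_toSet.subset fun j hj => hw j hj
    have := h _ w (isSign_minimizingSign lam d w s) hfin
    rw [energyB_minimizingSign lam d hw] at this
    linarith
  · rintro h σ w ⟨hσ, hσfin⟩ hw
    classical
    let s := hw.toFinset ∪ hσfin.toFinset
    have hws : ∀ j, w j ≠ j → j ∈ s := fun j hj =>
      Finset.mem_union_left _ (hw.mem_toFinset.mpr hj)
    have hσs : ∀ j, σ j ≠ 1 → j ∈ s := fun j hj => by simp [s, hj]
    linarith [h w s hws, neg_sum_le_energyB lam d hσ hws hσs]

variable {lam d}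

section
variable (h : ∀ (w : Equiv.Perm J) (s : Finset J), (∀ j, w j ≠ j → j ∈ s) →
  ∑ j ∈ s, (lam j * d j + |lam j * d (w j)|) ≤ 0)
include h

lemma mul_nonpos_of_sum_nonpos (j : J) : lam j * d j ≤ 0 := by
  have hj := h 1 {j} (by simp)
  simp only [Finset.sum_singleton, Equiv.Perm.one_apply] at hj
  linarith [le_abs_self (lam j * d j)]

lemma abs_le_abs_of_sum_nonpos {i j : J} (hij : |lam i| < |lam j|) : |d i| ≤ |d j| := by
  classical
  have hne : i ≠ j := by rintro rfl; exact lt_irrefl _ hij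
  have hswap := h (Equiv.swap i j) {i, j} fun k hk => by
    by_contra hks
    simp only [Finset.mem_insert, Finset.mem_singleton, not_or] at hks
    exact hk (Equiv.swap_apply_of_ne_of_ne hks.1 hks.2)
  rw [Finset.sum_pair hne, Equiv.swap_apply_left, Equiv.swap_apply_right] at hswap
  have hdiag k : lam k * d k = -(|lam k| * |d k|) :=
    mul_eq_neg_abs_mul_abs (mul_nonpos_of_sum_nonpos h k)
  simp only [hdiag, abs_mul] at hswap
  -- `hswap` now reads `(|λⱼ| - |λᵢ|) (|dⱼ| - |dᵢ|) ≥ 0`.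
  nlinarith
end

lemma sum_nonpos_of_minimalEnergy (h₁ : ∀ j, lam j * d j ≤ 0)
    (h₂ : ∀ i j : J, |lam i| < |lam j| → |d i| ≤ |d j|) (w : Equiv.Perm J) (s : Finset J)
    (hw : ∀ j, w j ≠ j → j ∈ s) : ∑ j ∈ s, (lam j * d j + |lam j * d (w j)|) ≤ 0 := by
  have hmono : MonovaryOn (fun j => |lam j|) (fun j => |d j|) s :=
    (Monovary.symm fun i j hij => h₂ i j hij).monovaryOn _
  have hrearr := hmono.sum_mul_comp_perm_le_sum_mul (σ := w) fun j hj => hw j hj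
  have hdiag j : lam j * d j = -(|lam j| * |d j|) := mul_eq_neg_abs_mul_abs (h₁ j)
  simp only [hdiag, abs_mul, Finset.sum_add_distrib, Finset.sum_neg_distrib]
  linarith

end MinimalEnergyConeB

open MinimalEnergyConeB in
theorem minimal_energy_cone_B (J : Type*) (lam d : J → ℝ) :
    (∀ (σ : J → ℝ) (w : Equiv.Perm J), IsSign σ → IsFinPerm w →
        0 ≤ energyB lam d σ w) ↔
    ((∀ j, lam j * d j ≤ 0) ∧ ∀ i j : J, |lam i| < |lam j| → |d i| ≤ |d j|) := by
  rw [energyB_nonneg_iff]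
  exact ⟨fun h => ⟨mul_nonpos_of_sum_nonpos h, fun _ _ => abs_le_abs_of_sum_nonpos h⟩,
    fun ⟨h₁, h₂⟩ => sum_nonpos_of_minimalEnergy h₁ h₂⟩
end

section
/- Let $J$ be an infinite set and $\lambda=(\lambda_j),\chi=(d_j)\in\mathbb{R}^J$. Suppose the positive energy condition holds for $W(D_J)$: the infimum, over finitely supported permutations $w$ of $J$ and finitely supported sign functions $\sigma$ with support of even cardinality, of $\sum_j\lambda_j(\sigma_jd_{w(j)}-d_j)$ is finite. Then $\sum_{j\in J_+}|\lambda_jd_j|<\infty$, where $J_+=\{j\in J: \lambda_jd_j>0\}$. -/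
open scoped BigOperators

open Finset

section

variable {J : Type*}

def signFlip [DecidableEq J] (F : Finset J) (j : J) : ℝ := if j ∈ F then -1 else 1

lemma isEvenSign_signFlip [DecidableEq J] {F : Finset J} (hF : Even #F) :
    IsEvenSign (signFlip F) := by
  have hneg : ∀ j, signFlip F j = -1 ↔ j ∈ F := fun j => by
    by_cases hj : j ∈ F <;> simp [signFlip, hj]; norm_num
  refine ⟨⟨fun j => ?_, F.finite_toSet.subset fun j hj => ?_⟩, F, hneg, hF⟩
  · by_cases hj : j ∈ F <;> simp [signFlip, hj]
  · by_contra hjF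
    simp [signFlip, show j ∉ F from hjF] at hj

lemma isFinPerm_one : IsFinPerm (1 : Equiv.Perm J) := by
  simp [IsFinPerm]

lemma energyB_signFlip_one [DecidableEq J] (lam d : J → ℝ) (F : Finset J) :
    energyB lam d (signFlip F) 1 = -2 * ∑ j ∈ F, lam j * d j := by
  rw [energyB, finsum_eq_finsetSum_of_support_subset (s := F), mul_sum]
  · refine sum_congr rfl fun j hj => ?_
    simp only [signFlip, hj, if_true, Equiv.Perm.one_apply]
    ring
  · intro j hj
    by_contra hjF
    simp [signFlip, show j ∉ F from hjF] at hj

/-- Flipping the signs on an even set `F` with `w = 1` costs energy `-2 ∑_{j ∈ F} λⱼ dⱼ`. -/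
lemma PECD.exists_sum_le_of_even_card {lam d : J → ℝ} (h : PECD lam d) :
    ∃ B, ∀ F : Finset J, Even #F → ∑ j ∈ F, lam j * d j ≤ B := by
  classical
  obtain ⟨C, hC⟩ := h
  refine ⟨-C / 2, fun F hF => ?_⟩
  have := hC _ 1 (isEvenSign_signFlip hF) isFinPerm_one
  rw [energyB_signFlip_one] at this
  linarith

/-- A parity defect of `F` is repaired by adding or removing one fixed element `k`. -/
lemma exists_sum_le_of_even_card {f : J → ℝ} {B : ℝ}
    (h : ∀ F : Finset J, Even #F → ∑ j ∈ F, f j ≤ B) :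
    ∃ B', ∀ F : Finset J, ∑ j ∈ F, f j ≤ B' := by
  classical
  rcases isEmpty_or_nonempty J with hJ | ⟨⟨k⟩⟩
  · exact ⟨B, fun F => h F (by simp [F.eq_empty_of_isEmpty])⟩
  refine ⟨B + |f k|, fun F => ?_⟩
  rcases Nat.even_or_odd #F with hF | hF
  · linarith [h F hF, abs_nonneg (f k)]
  by_cases hk : k ∈ F
  · have herase := h (F.erase k) (by rw [card_erase_of_mem hk]; exact Nat.Odd.sub_odd hF odd_one)
    rw [← sum_erase_add F f hk]
    linarith [le_abs_self (f k)]
  · have hinsert := h (insert k F) (by rw [card_insert_of_notMem hk]; exact hF.add_one)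
    rw [sum_insert hk] at hinsert
    linarith [neg_abs_le (f k)]

lemma summable_abs_of_sum_le {f : J → ℝ} {B : ℝ} (h : ∀ F : Finset J, ∑ j ∈ F, f j ≤ B) :
    Summable fun j : {j // 0 < f j} => |f j| := by
  refine summable_of_sum_le (c := B) (fun _ => abs_nonneg _) fun u => ?_
  calc ∑ j ∈ u, |f j| = ∑ j ∈ u.map (Function.Embedding.subtype _), f j := by
        rw [sum_map]
        exact sum_congr rfl fun j _ => abs_of_pos j.2
    _ ≤ B := h _

end

theorem pecD_summability_at_zero_general (J : Type*) (lam d : J → ℝ)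
    (hpec : PECD lam d) :
    Summable fun j : {j : J // 0 < lam j * d j} => |lam j.1 * d j.1| := by
  obtain ⟨B, hB⟩ := hpec.exists_sum_le_of_even_card
  obtain ⟨B', hB'⟩ := exists_sum_le_of_even_card hB
  exact summable_abs_of_sum_le hB'

theorem pecD_summability_at_zero (J : Type*) [Infinite J] (lam d : J → ℝ)
    (hpec : PECD lam d) :
    Summable fun j : {j : J // 0 < lam j * d j} => |lam j.1 * d j.1| :=
  pecD_summability_at_zero_general J lam d hpec
end

section
/- Let $J$ be an infinite set, $\lambda=(\lambda_j)_{j\in J}\in\mathbb{R}^J$ with finite range (i.e. $\{\lambda_j:j\in J\}$ is a finite set), and $\chi=(d_j)_{j\in J}\in\mathbb{R}^J$. Then the following are equivalent: (1) $(J,\lambda,\chi)$ satisfies the positive energy condition for $W(A_J)$, i.e. $\inf_w\sum_j\lambda_j(d_{w(j)}-d_j)>-\infty$ over finitely supported permutations $w$ of $J$; (2) $\chi=\chi_0+\chi_1$ where $\chi_1\in\ell^1(J)$ and $\chi_0=(d'_j)$ satisfies: $\lambda_i<\lambda_j$ implies $d'_i\ge d'_j$ for all $i,j\in J$. -/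
open scoped BigOperators

/-!
For `⇐`, the rearrangement inequality makes the energy of `d₀` nonnegative, and the energy of
the summable part `d₁` is at most `2 ‖λ‖_∞ ‖d₁‖₁` in absolute value.

For `⇒`, cut `J` at each non-maximal level `v` of `λ` into `L = {λ ≤ v}` and `U = {v < λ}`, and
let `δ > 0` be the gap from `v` to the next level. A finite permutation exchanging equally many
points `S ⊆ L` and `T ⊆ U`, with `d` smaller on `S` than on `T`, has energy at most
`-δ (∑_T d - ∑_S d)`; so a lower bound `C` on the energy bounds every such excess by `-C / δ`.
This excess bound produces a threshold `c_v` such that `(c_v - d)⁺` is summable on `L` and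
`(d - c_v)⁺` on `U`: take for `c_v` the supremum of the thresholds satisfying the first condition.
Clamping `d` on each level between the thresholds of the cuts below and above it gives `d₀`, and
the clamping error is dominated by these summable parts.
-/

section Energy

variable {J : Type*} {lam d : J → ℝ} {w : Equiv.Perm J}

lemma energyA_eq_sum {s : Finset J} (hs : {j | w j ≠ j} ⊆ s) :
    energyA lam d w = ∑ j ∈ s, lam j * (d (w j) - d j) :=
  finsum_eq_sum_of_support_subset _ fun j hj => hs fun hfix => hj (by simp [hfix])

lemma energyA_add {d₀ d₁ : J → ℝ} (hw : IsFinPerm w) :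
    energyA lam (d₀ + d₁) w = energyA lam d₀ w + energyA lam d₁ w := by
  simp only [energyA_eq_sum hw.coe_toFinset.ge, Pi.add_apply, ← Finset.sum_add_distrib]
  exact Finset.sum_congr rfl fun j _ => by ring

lemma energyA_nonneg_of_antivary (h : Antivary d lam) (hw : IsFinPerm w) :
    0 ≤ energyA lam d w := by
  have hrearr := (h.symm.antivaryOn _).sum_mul_le_sum_mul_comp_perm hw.coe_toFinset.ge
  simp only [energyA_eq_sum hw.coe_toFinset.ge, mul_sub, Finset.sum_sub_distrib]
  linarith

lemma abs_energyA_le {M : ℝ} (hM₀ : 0 ≤ M) (hM : ∀ j, |lam j| ≤ M) (hd : Summable fun j => |d j|)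
    (hw : IsFinPerm w) : |energyA lam d w| ≤ 2 * M * ∑' j, |d j| := by
  set s := hw.toFinset
  calc |energyA lam d w| = |∑ j ∈ s, lam j * (d (w j) - d j)| := by
        rw [energyA_eq_sum hw.coe_toFinset.ge]
    _ ≤ ∑ j ∈ s, M * (|d (w j)| + |d j|) := by
        refine (Finset.abs_sum_le_sum_abs _ _).trans (Finset.sum_le_sum fun j _ => ?_)
        rw [abs_mul]
        exact mul_le_mul (hM j) (abs_sub _ _) (abs_nonneg _) hM₀
    _ = 2 * M * ∑ j ∈ s, |d j| := by
        rw [← Finset.mul_sum, Finset.sum_add_distrib,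
          Equiv.Perm.sum_comp w s (fun j => |d j|) hw.coe_toFinset.ge]
        ring
    _ ≤ 2 * M * ∑' j, |d j| := by
        gcongr
        exact hd.sum_le_tsum s fun j _ => abs_nonneg _

lemma pecA_add_of_antivary_of_summable {M : ℝ} (hM₀ : 0 ≤ M) (hM : ∀ j, |lam j| ≤ M) {d₀ d₁ : J → ℝ}
    (hd₀ : Antivary d₀ lam) (hd₁ : Summable fun j => |d₁ j|) : PECA lam (d₀ + d₁) := by
  refine ⟨-(2 * M * ∑' j, |d₁ j|), fun w hw => ?_⟩
  rw [energyA_add hw]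
  linarith [energyA_nonneg_of_antivary hd₀ hw, neg_abs_le (energyA lam d₁ w),
    abs_energyA_le hM₀ hM hd₁ hw]

end Energy

section Excess

variable {J : Type*}

lemma exists_perm_exchange {S T : Finset J} (hST : Disjoint S T) (hcard : S.card = T.card) :
    ∃ w : Equiv.Perm J, S.map w.toEmbedding = T ∧ T.map w.toEmbedding = S ∧
      {j | w j ≠ j} ⊆ ↑S ∪ ↑T := by
  classical
  let e := Finset.equivOfCardEq hcard
  let f : J → J := fun k =>
    if hS : k ∈ S then e ⟨k, hS⟩ else if hT : k ∈ T then e.symm ⟨k, hT⟩ else k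
  have hfS : ∀ k (hk : k ∈ S), f k = e ⟨k, hk⟩ := fun k hk => dif_pos hk
  have hfT : ∀ k (hk : k ∈ T), f k = e.symm ⟨k, hk⟩ := fun k hk =>
    (dif_neg (Finset.disjoint_right.1 hST hk)).trans (dif_pos hk)
  have hf : Function.Involutive f := by
    intro k
    by_cases hS : k ∈ S
    · rw [hfS k hS, hfT _ (e _).2]
      simp
    by_cases hT : k ∈ T
    · rw [hfT k hT, hfS _ (e.symm _).2]
      simp
    simp [f, hS, hT]
  have hmaps : ∀ {A B : Finset J}, A.card = B.card → (∀ k ∈ A, f k ∈ B) →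
      A.map (hf.toPerm f).toEmbedding = B := fun hAB hAB' =>
    Finset.eq_of_subset_of_card_le
      (fun j hj => by
        obtain ⟨k, hk, rfl⟩ := Finset.mem_map.1 hj
        exact hAB' k hk)
      (by rw [Finset.card_map, hAB])
  refine ⟨hf.toPerm f, hmaps hcard fun k hk => ?_, hmaps hcard.symm fun k hk => ?_, ?_⟩
  · rw [hfS k hk]; exact (e _).2
  · rw [hfT k hk]; exact (e.symm _).2
  · intro k hk
    by_contra hST'
    simp only [Set.mem_union, Finset.mem_coe, not_or] at hST'
    exact hk (by simp [f, hST'.1, hST'.2])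

def BoundedExcess (L U : Set J) (d : J → ℝ) (K : ℝ) : Prop :=
  ∀ S T : Finset J, ↑S ⊆ L → ↑T ⊆ U → S.card = T.card → (∀ i ∈ S, ∀ j ∈ T, d i ≤ d j) →
    ∑ j ∈ T, d j - ∑ i ∈ S, d i ≤ K

lemma boundedExcess_of_le_energyA {lam d : J → ℝ} {C δ v : ℝ}
    (hC : ∀ w : Equiv.Perm J, IsFinPerm w → C ≤ energyA lam d w) (hδ : 0 < δ)
    (hgap : ∀ j, v < lam j → δ ≤ lam j - v) :
    BoundedExcess {j | lam j ≤ v} {j | v < lam j} d (-C / δ) := by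
  classical
  intro S T hS hT hcard hle
  have hST : Disjoint S T :=
    Finset.disjoint_left.2 fun k hkS hkT =>
      (show lam k ≤ v from hS hkS).not_gt (show v < lam k from hT hkT)
  obtain ⟨w, hwS, hwT, hw⟩ := exists_perm_exchange hST hcard
  have hmemS : ∀ i ∈ S, w i ∈ T := fun i hi => hwS ▸ Finset.mem_map_of_mem _ hi
  have hmemT : ∀ j ∈ T, w j ∈ S := fun j hj => hwT ▸ Finset.mem_map_of_mem _ hj
  have hsumS : ∑ i ∈ S, d (w i) = ∑ j ∈ T, d j := by rw [← hwS, Finset.sum_map]; rfl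
  have hsumT : ∑ j ∈ T, d (w j) = ∑ i ∈ S, d i := by rw [← hwT, Finset.sum_map]; rfl
  have hlowS : ∑ i ∈ S, lam i * (d (w i) - d i) ≤ ∑ i ∈ S, v * (d (w i) - d i) :=
    Finset.sum_le_sum fun i hi =>
      mul_le_mul_of_nonneg_right (hS hi) (sub_nonneg.2 (hle i hi _ (hmemS i hi)))
  have hlowT : ∑ j ∈ T, lam j * (d (w j) - d j) ≤ ∑ j ∈ T, (v + δ) * (d (w j) - d j) :=
    Finset.sum_le_sum fun j hj =>
      mul_le_mul_of_nonpos_right (by linarith [hgap j (hT hj)])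
        (sub_nonpos.2 (hle _ (hmemT j hj) j hj))
  have hE := hC w ((S.finite_toSet.union T.finite_toSet).subset hw)
  rw [energyA_eq_sum (s := S ∪ T) (by rwa [Finset.coe_union]), Finset.sum_union hST] at hE
  simp only [← Finset.mul_sum, Finset.sum_sub_distrib, hsumS, hsumT] at hlowS hlowT
  rw [le_div_iff₀ hδ]
  linarith

lemma summable_indicator_posPart_of_le {s : Set J} {f g : J → ℝ} (hfg : f ≤ g)
    (hg : Summable (s.indicator fun i => (g i)⁺)) : Summable (s.indicator fun i => (f i)⁺) :=
  hg.of_nonneg_of_le (Set.indicator_nonneg fun _ _ => posPart_nonneg _)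
    fun _ => Set.indicator_le_indicator (posPart_mono (hfg _))

lemma summable_indicator_posPart_of_finite {s : Set J} {f : J → ℝ}
    (hf : {i ∈ s | 0 < f i}.Finite) : Summable (s.indicator fun i => (f i)⁺) :=
  summable_of_hasFiniteSupport <| hf.subset fun i hi => by
    obtain ⟨his, hfi⟩ := Set.indicator_apply_ne_zero.1 hi
    exact ⟨his, lt_of_not_ge fun h => hfi (posPart_eq_zero.2 h)⟩

def IsSummableCut (L U : Set J) (d : J → ℝ) (c : ℝ) : Prop :=
  Summable (L.indicator fun i => (c - d i)⁺) ∧ Summable (U.indicator fun j => (d j - c)⁺)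

namespace BoundedExcess

variable {L U : Set J} {d : J → ℝ} {K : ℝ}

lemma nonneg (h : BoundedExcess L U d K) : 0 ≤ K := by
  simpa using h ∅ ∅ (by simp) (by simp) rfl (by simp)

lemma sub_le (h : BoundedExcess L U d K) {i j : J} (hi : i ∈ L) (hj : j ∈ U) :
    d j - d i ≤ K := by
  rcases le_or_gt (d i) (d j) with hij | hij
  · simpa using h {i} {j} (by simpa) (by simpa) rfl (by simpa)
  · linarith [h.nonneg]

lemma neg (h : BoundedExcess L U d K) : BoundedExcess U L (-d) K :=
  fun S T hS hT hcard hle => by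
    have := h T S hT hS hcard.symm fun i hi j hj => neg_le_neg_iff.1 (hle j hj i hi)
    simp only [Pi.neg_apply, Finset.sum_neg_distrib]
    linarith

lemma exists_summable_lower_of_not_summable_upper (h : BoundedExcess L U d K) {x : ℝ}
    (hx : ¬Summable (U.indicator fun j => (d j - x)⁺)) :
    ∃ ε > 0, Summable (L.indicator fun i => (x + ε - d i)⁺) := by
  classical
  obtain ⟨s, hs⟩ : ∃ s : Finset J, 2 * K < ∑ j ∈ s, U.indicator (fun j => (d j - x)⁺) j := by
    by_contra! hle
    exact hx (summable_of_sum_le (Set.indicator_nonneg fun j _ => posPart_nonneg _) hle)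
  set T := s.filter fun j => j ∈ U ∧ x < d j
  have hsT : ∑ j ∈ s, U.indicator (fun j => (d j - x)⁺) j = ∑ j ∈ T, (d j - x) := by
    rw [Finset.sum_filter]
    refine Finset.sum_congr rfl fun j _ => ?_
    by_cases hj : j ∈ U
    · by_cases hxj : x < d j
      · simp [hj, hxj, posPart_eq_self.2 (sub_nonneg.2 hxj.le)]
      · simp [hj, hxj, posPart_eq_zero.2 (sub_nonpos.2 (not_lt.1 hxj))]
    · simp [hj]
  have hTne : T.Nonempty :=
    Finset.nonempty_of_sum_ne_zero (f := fun j => d j - x) (by linarith [h.nonneg])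
  set m := T.inf' hTne fun j => d j - x
  have hm : 0 < m := (Finset.lt_inf'_iff _).2 fun j hj => sub_pos.2 (Finset.mem_filter.1 hj).2.2
  have hTm : ∀ j ∈ T, m ≤ d j - x := fun j hj => Finset.inf'_le _ hj
  -- `d` exceeds `x` on `T` by more than `2K` in total and by at least `m` at each point, so
  -- exchanging `T` with as many points of `L` below `x + m / 2` would create an excess above `K`.
  refine ⟨m / 2, half_pos hm, summable_indicator_posPart_of_finite ?_⟩
  by_contra hinf
  obtain ⟨S, hSsub, hScard⟩ := Set.Infinite.exists_subset_card_eq hinf T.card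
  have hSlt : ∀ i ∈ S, d i < x + m / 2 := fun i hi => sub_pos.1 (hSsub hi).2
  have hexcess := h S T (hSsub.trans (Set.sep_subset _ _))
    (fun j hj => (Finset.mem_filter.1 hj).2.1) hScard
    fun i hi j hj => by linarith [hSlt i hi, hTm j hj]
  have hSsum := Finset.sum_le_card_nsmul S d (x + m / 2) fun i hi => (hSlt i hi).le
  have hTsum := Finset.card_nsmul_le_sum T (fun j => d j - x) m hTm
  rw [hScard, nsmul_eq_mul] at hSsum
  rw [nsmul_eq_mul] at hTsum
  rw [Finset.sum_sub_distrib, Finset.sum_const, nsmul_eq_mul] at hsT hTsum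
  linarith

lemma exists_summable_upper_of_not_summable_lower (h : BoundedExcess L U d K) {x : ℝ}
    (hx : ¬Summable (L.indicator fun i => (x - d i)⁺)) :
    ∃ ε > 0, Summable (U.indicator fun j => (d j - (x - ε))⁺) := by
  obtain ⟨ε, hε, hsum⟩ := h.neg.exists_summable_lower_of_not_summable_upper (x := -x)
    (by simpa only [Pi.neg_apply, neg_sub_neg] using hx)
  refine ⟨ε, hε, ?_⟩
  convert hsum using 4 with j
  simp only [Pi.neg_apply]
  ring

lemma exists_isSummableCut (h : BoundedExcess L U d K) (hL : L.Nonempty) (hU : U.Nonempty) :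
    ∃ c, IsSummableCut L U d c := by
  obtain ⟨i₀, hi₀⟩ := hL
  obtain ⟨j₀, hj₀⟩ := hU
  set F := {c | Summable (L.indicator fun i => (c - d i)⁺)}
  have hFlow : ∀ {c' c}, c' ≤ c → c ∈ F → c' ∈ F := fun hc hcF =>
    summable_indicator_posPart_of_le (fun i => sub_le_sub_right hc (d i)) hcF
  have hlower₀ : d j₀ - K ∈ F := summable_indicator_posPart_of_finite <|
    Set.finite_empty.subset fun i ⟨hi, hpos⟩ => by linarith [h.sub_le hi hj₀]
  have hupper₀ : Summable (U.indicator fun j => (d j - (d i₀ + K))⁺) :=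
    summable_indicator_posPart_of_finite <|
      Set.finite_empty.subset fun j ⟨hj, hpos⟩ => by linarith [h.sub_le hi₀ hj]
  by_cases hF : BddAbove F
  swap
  · obtain ⟨c, hcF, hc⟩ := not_bddAbove_iff.1 hF (d i₀ + K)
    exact ⟨d i₀ + K, hFlow hc.le hcF, hupper₀⟩
  set x := sSup F
  by_cases hux : Summable (U.indicator fun j => (d j - x)⁺)
  · by_cases hlx : x ∈ F
    · exact ⟨x, hlx, hux⟩
    obtain ⟨ε, hε, hupper⟩ := h.exists_summable_upper_of_not_summable_lower hlx
    obtain ⟨c, hcF, hc⟩ := exists_lt_of_lt_csSup ⟨_, hlower₀⟩ (sub_lt_self x hε)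
    exact ⟨x - ε, hFlow hc.le hcF, hupper⟩
  · obtain ⟨ε, hε, hlower⟩ := h.exists_summable_lower_of_not_summable_upper hux
    linarith [le_csSup hF hlower]

end BoundedExcess

end Excess

section Clamp

noncomputable def levelCap (V : Finset ℝ) (c : ℝ → ℝ) (a x : ℝ) : ℝ :=
  (insert x ((V.filter (· < a)).image c)).min' (Finset.insert_nonempty _ _)

noncomputable def levelClamp (V : Finset ℝ) (c : ℝ → ℝ) (a x : ℝ) : ℝ :=
  (insert (levelCap V c a x) ((V.filter (a ≤ ·)).image c)).max' (Finset.insert_nonempty _ _)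

variable {V : Finset ℝ} {c : ℝ → ℝ}

lemma levelCap_le {a w : ℝ} (x : ℝ) (hw : w ∈ V) (hwa : w < a) : levelCap V c a x ≤ c w :=
  Finset.min'_le _ _ <| Finset.mem_insert_of_mem <|
    Finset.mem_image_of_mem c (Finset.mem_filter.2 ⟨hw, hwa⟩)

lemma le_levelClamp {a w : ℝ} (x : ℝ) (hw : w ∈ V) (haw : a ≤ w) :
    c w ≤ levelClamp V c a x :=
  Finset.le_max' _ _ <| Finset.mem_insert_of_mem <|
    Finset.mem_image_of_mem c (Finset.mem_filter.2 ⟨hw, haw⟩)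

lemma levelClamp_le_levelClamp {a b : ℝ} (x y : ℝ) (hb : b ∈ V) (hba : b < a) :
    levelClamp V c a x ≤ levelClamp V c b y := by
  refine Finset.max'_le _ _ _ fun z hz => ?_
  rcases Finset.mem_insert.1 hz with rfl | hz
  · exact (levelCap_le x hb hba).trans (le_levelClamp y hb le_rfl)
  · obtain ⟨w, hw, rfl⟩ := Finset.mem_image.1 hz
    obtain ⟨hwV, haw⟩ := Finset.mem_filter.1 hw
    exact le_levelClamp y hwV (hba.le.trans haw)

lemma sub_levelClamp_le (a x : ℝ) :
    x - levelClamp V c a x ≤ ∑ w ∈ V.filter (· < a), (x - c w)⁺ := by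
  have hcap : levelCap V c a x ≤ levelClamp V c a x :=
    Finset.le_max' _ _ (Finset.mem_insert_self _ _)
  suffices x - levelCap V c a x ≤ ∑ w ∈ V.filter (· < a), (x - c w)⁺ by linarith
  have hmem : levelCap V c a x ∈ insert x ((V.filter (· < a)).image c) := Finset.min'_mem _ _
  rcases Finset.mem_insert.1 hmem with hx | hx
  · rw [hx, sub_self]
    exact Finset.sum_nonneg fun _ _ => posPart_nonneg _
  · obtain ⟨w, hw, hcw⟩ := Finset.mem_image.1 hx
    rw [← hcw]
    exact (le_posPart _).trans
      (Finset.single_le_sum (f := fun w => (x - c w)⁺) (fun _ _ => posPart_nonneg _) hw)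

lemma levelClamp_sub_le (a x : ℝ) :
    levelClamp V c a x - x ≤ ∑ w ∈ V.filter (a ≤ ·), (c w - x)⁺ := by
  have hmem : levelClamp V c a x ∈ insert (levelCap V c a x) ((V.filter (a ≤ ·)).image c) :=
    Finset.max'_mem _ _
  rcases Finset.mem_insert.1 hmem with hx | hx
  · have hcap : levelCap V c a x ≤ x := Finset.min'_le _ _ (Finset.mem_insert_self _ _)
    rw [hx]
    linarith [Finset.sum_nonneg fun w (_ : w ∈ V.filter (a ≤ ·)) => posPart_nonneg (c w - x)]
  · obtain ⟨w, hw, hcw⟩ := Finset.mem_image.1 hx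
    rw [← hcw]
    exact (le_posPart _).trans
      (Finset.single_le_sum (f := fun w => (c w - x)⁺) (fun _ _ => posPart_nonneg _) hw)

end Clamp

lemma exists_decomposition_of_isSummableCut {J : Type*} {lam d : J → ℝ} (V : Finset ℝ)
    (c : ℝ → ℝ) (hV : ∀ i j, lam i < lam j → lam i ∈ V)
    (hc : ∀ v ∈ V, IsSummableCut {j | lam j ≤ v} {j | v < lam j} d (c v)) :
    ∃ d₀ d₁ : J → ℝ, (∀ j, d j = d₀ j + d₁ j) ∧ (Summable fun j => |d₁ j|) ∧
      ∀ i j : J, lam i < lam j → d₀ j ≤ d₀ i := by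
  set d₀ := fun j => levelClamp V c (lam j) (d j)
  refine ⟨d₀, d - d₀, fun j => (add_sub_cancel _ _).symm, ?_,
    fun i j hij => levelClamp_le_levelClamp _ _ (hV i j hij) hij⟩
  have hbound : ∀ j, |d j - d₀ j| ≤ ∑ w ∈ V,
      ({j | w < lam j}.indicator (fun j => (d j - c w)⁺) j +
        {j | lam j ≤ w}.indicator (fun j => (c w - d j)⁺) j) := by
    intro j
    simp only [Finset.sum_add_distrib, Set.indicator_apply, Set.mem_ofPred_eq, ← Finset.sum_filter]
    have h₁ := sub_levelClamp_le (V := V) (c := c) (lam j) (d j)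
    have h₂ := levelClamp_sub_le (V := V) (c := c) (lam j) (d j)
    have h₁' := Finset.sum_nonneg fun w (_ : w ∈ V.filter (· < lam j)) =>
      posPart_nonneg (d j - c w)
    have h₂' := Finset.sum_nonneg fun w (_ : w ∈ V.filter (lam j ≤ ·)) =>
      posPart_nonneg (c w - d j)
    rw [abs_sub_le_iff]
    constructor <;> linarith
  exact Summable.of_nonneg_of_le (fun j => abs_nonneg _) hbound
    (summable_sum fun w hw => (hc w hw).2.add (hc w hw).1)

lemma exists_pos_le_sub_of_finite {s : Set ℝ} (hs : s.Finite) (v : ℝ) :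
    ∃ δ > 0, ∀ y ∈ s, v < y → δ ≤ y - v := by
  obtain ⟨δ, hδ, hball⟩ := Metric.mem_nhds_iff.1 <|
    (hs.sdiff (t := {v})).isClosed.isOpen_compl.mem_nhds fun hv => hv.2 rfl
  refine ⟨δ, hδ, fun y hy hvy => not_lt.1 fun hlt => hball ?_ ⟨hy, hvy.ne'⟩⟩
  rw [Metric.mem_ball, Real.dist_eq, abs_of_pos (sub_pos.2 hvy)]
  exact hlt

theorem pecA_characterisation_general (J : Type*) (lam d : J → ℝ)
    (hfin : (Set.range lam).Finite) :
    PECA lam d ↔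
      ∃ d₀ d₁ : J → ℝ, (∀ j, d j = d₀ j + d₁ j) ∧ (Summable fun j => |d₁ j|) ∧
        ∀ i j : J, lam i < lam j → d₀ j ≤ d₀ i := by
  classical
  constructor
  · rintro ⟨C, hC⟩
    have hcut : ∀ v ∈ hfin.toFinset.filter fun v => ∃ j, v < lam j,
        ∃ c, IsSummableCut {j | lam j ≤ v} {j | v < lam j} d c := by
      intro v hv
      obtain ⟨⟨i, rfl⟩, j, hij⟩ : v ∈ Set.range lam ∧ ∃ j, v < lam j := by simpa using hv
      obtain ⟨δ, hδ, hgap⟩ := exists_pos_le_sub_of_finite hfin (lam i)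
      exact (boundedExcess_of_le_energyA hC hδ fun j => hgap _ ⟨j, rfl⟩).exists_isSummableCut
        ⟨i, show lam i ≤ lam i from le_rfl⟩ ⟨j, hij⟩
    choose! c hc using hcut
    exact exists_decomposition_of_isSummableCut _ c
      (fun i j hij => Finset.mem_filter.2 ⟨hfin.mem_toFinset.2 ⟨i, rfl⟩, j, hij⟩) hc
  · rintro ⟨d₀, d₁, hd, hd₁, hd₀⟩
    obtain ⟨M, hM₀, hM⟩ := hfin.isBounded.exists_pos_norm_le
    rw [show d = d₀ + d₁ from funext hd]
    exact pecA_add_of_antivary_of_summable hM₀.le (fun j => hM _ ⟨j, rfl⟩)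
      (fun i j => hd₀ i j) hd₁

theorem pecA_characterisation (J : Type*) [Infinite J] (lam d : J → ℝ)
    (hfin : (Set.range lam).Finite) :
    PECA lam d ↔
      ∃ d₀ d₁ : J → ℝ, (∀ j, d j = d₀ j + d₁ j) ∧ (Summable fun j => |d₁ j|) ∧
        ∀ i j : J, lam i < lam j → d₀ j ≤ d₀ i :=
  pecA_characterisation_general J lam d hfin
end

section
/- Let $J$ be an infinite set and $\lambda=(\lambda_j),\chi=(d_j)\in\mathbb{R}^J$ with $\lambda$ of finite range. Then $(J,\lambda,\chi)$ satisfies the positive energy condition for $W(D_J)$ if and only if it satisfies the positive energy condition for $W(B_J)$. -/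
open scoped BigOperators

/-!
If infinitely many `j` have `λⱼ dⱼ > M`, an odd sign change becomes even after additionally
flipping one such `j` fixed by `w`, which changes the energy by `2 λⱼ dⱼ > 2M`; so the `D`-bound
gives a `B`-bound. Otherwise `λⱼ dⱼ → -∞` along the cofinite filter. Then for `k` running through an
infinite fibre `λ = c`, the bounded energies of the transposition `(j₀ k)`, with and without sign
changes at `j₀` and `k`, force `|λ_{j₀}| ≤ |c|`. So all infinite fibres have the same absolute
value `a`, `|λ| ≤ a` everywhere and `λⱼ dⱼ = -a |dⱼ|` for all but finitely many `j`; this bounds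
every `B`-energy from below directly, since `|λⱼ σⱼ d_{w(j)}| ≤ a |d_{w(j)}|` and the `a |d|`
terms cancel after reindexing by `w`.
-/

open Filter

section

variable {J : Type*}

def signOf [DecidableEq J] (F : Finset J) : J → ℝ := fun j => if j ∈ F then -1 else 1

lemma signOf_of_mem [DecidableEq J] {F : Finset J} {j : J} (hj : j ∈ F) : signOf F j = -1 :=
  if_pos hj

lemma signOf_of_notMem [DecidableEq J] {F : Finset J} {j : J} (hj : j ∉ F) : signOf F j = 1 :=
  if_neg hj

lemma isEvenSign_signOf [DecidableEq J] {F : Finset J} (hF : Even F.card) :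
    IsEvenSign (signOf F) := by
  refine ⟨⟨fun j => ?_, F.finite_toSet.subset fun j hj => ?_⟩, F, fun j => ?_, hF⟩
  · unfold signOf; split_ifs <;> simp
  · by_contra hjF
    exact hj (signOf_of_notMem hjF)
  · unfold signOf; split_ifs with h <;> norm_num [h]

lemma IsSign.eq_signOf [DecidableEq J] {σ : J → ℝ} (hσ : IsSign σ) :
    σ = signOf hσ.2.toFinset := by
  funext j
  rcases hσ.1 j with h | h <;> simp [signOf, h]

lemma IsSign.abs_eq_one {σ : J → ℝ} (hσ : IsSign σ) (j : J) : |σ j| = 1 := by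
  rcases hσ.1 j with h | h <;> simp [h]

lemma IsFinPerm.swap [DecidableEq J] (j k : J) : IsFinPerm (Equiv.swap j k) :=
  (Set.toFinite {j, k}).subset fun i hi => by
    by_contra hjk
    simp only [Set.mem_insert_iff, Set.mem_singleton_iff, not_or] at hjk
    exact hi (Equiv.swap_apply_of_ne_of_ne hjk.1 hjk.2)

section Energy

variable {lam d σ : J → ℝ} {w : Equiv.Perm J}

lemma energyB_eq_sum (S : Finset J) (hσ : ∀ j ∉ S, σ j = 1) (hw : ∀ j ∉ S, w j = j) :
    energyB lam d σ w = ∑ j ∈ S, lam j * (σ j * d (w j) - d j) :=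
  finsum_eq_sum_of_support_subset _ fun j hj => by
    by_contra hjS
    simp [hσ j hjS, hw j hjS] at hj

lemma energyB_swap [DecidableEq J] {j k : J} (hjk : j ≠ k)
    (hσ : ∀ i, i ≠ j → i ≠ k → σ i = 1) :
    energyB lam d σ (Equiv.swap j k) =
      lam j * (σ j * d k - d j) + lam k * (σ k * d j - d k) := by
  rw [energyB_eq_sum {j, k}, Finset.sum_pair hjk, Equiv.swap_apply_left,
    Equiv.swap_apply_right]
  all_goals
    intro i hi
    simp only [Finset.mem_insert, Finset.mem_singleton, not_or] at hi
  · exact hσ i hi.1 hi.2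
  · exact Equiv.swap_apply_of_ne_of_ne hi.1 hi.2

lemma energyB_signOf_insert [DecidableEq J] {F : Finset J} {j : J} (hw : IsFinPerm w)
    (hjF : j ∉ F) (hwj : w j = j) :
    energyB lam d (signOf F) w = energyB lam d (signOf (insert j F)) w + 2 * (lam j * d j) := by
  set S := insert j (F ∪ hw.toFinset)
  have hwS : ∀ i ∉ S, w i = i := fun i hi => by
    by_contra h
    exact hi (Finset.mem_insert_of_mem (Finset.mem_union_right _ (hw.mem_toFinset.2 h)))
  have hsign : ∀ G ⊆ S, ∀ i ∉ S, signOf G i = 1 := fun G hG i hi =>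
    signOf_of_notMem fun h => hi (hG h)
  rw [energyB_eq_sum S (hsign F ?_) hwS, energyB_eq_sum S (hsign _ ?_) hwS,
    ← sub_eq_iff_eq_add', ← Finset.sum_sub_distrib, Finset.sum_eq_single j]
  · rw [signOf_of_notMem hjF, signOf_of_mem (Finset.mem_insert_self j F), hwj]
    ring
  · intro i _ hij
    simp [signOf, hij]
  · simp [S]
  · exact Finset.insert_subset_insert _ Finset.subset_union_left
  · exact Finset.subset_union_left.trans (Finset.subset_insert _ _)

end Energy

theorem pecB_of_pecD_of_infinite {lam d : J → ℝ} {M : ℝ} (hD : PECD lam d)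
    (hM : {j | M < lam j * d j}.Infinite) : PECB lam d := by
  classical
  obtain ⟨C, hC⟩ := hD
  refine ⟨min C (C + 2 * M), fun σ w hσ hw => ?_⟩
  rw [hσ.eq_signOf]
  set F := hσ.2.toFinset
  rcases Nat.even_or_odd F.card with hF | hF
  · exact (min_le_left _ _).trans (hC _ w (isEvenSign_signOf hF) hw)
  obtain ⟨j, hjM, hjF, hwj⟩ : ∃ j, M < lam j * d j ∧ j ∉ F ∧ w j = j := by
    obtain ⟨j, hjM, hj⟩ := (hM.sdiff (F.finite_toSet.union hw)).nonempty
    simp only [Set.mem_union, Finset.mem_coe, Set.mem_ofPred_eq, not_or, not_not] at hj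
    exact ⟨j, hjM, hj⟩
  have hF' : Even (insert j F).card := by
    rw [Finset.card_insert_of_notMem hjF]
    exact hF.add_one
  rw [energyB_signOf_insert hw hjF hwj]
  linarith [hC _ w (isEvenSign_signOf hF') hw, min_le_right C (C + 2 * M)]

lemma nonpos_of_forall_exists_lt_le_mul {x C : ℝ} (h : ∀ M, ∃ t < M, C ≤ x * t) :
    x ≤ 0 := by
  by_contra! hx
  obtain ⟨t, ht, hCt⟩ := h (C / x)
  rw [lt_div_iff₀ hx] at ht
  linarith

lemma abs_le_abs_of_infinite_fiber {lam d : J → ℝ} (hD : PECD lam d)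
    (htend : Tendsto (fun j => lam j * d j) cofinite atBot) {c : ℝ}
    (hc : {j | lam j = c}.Infinite) (j₀ : J) : |lam j₀| ≤ |c| := by
  classical
  obtain ⟨C, hC⟩ := hD
  have hc0 : c ≠ 0 := by
    rintro rfl
    refine hc ((eventually_cofinite.1 (tendsto_atBot.1 htend (-1))).subset fun j hj => ?_)
    simp_all
  have hfar : ∀ M, ∃ k, lam k = c ∧ k ≠ j₀ ∧ c * d k < M := fun M =>
    ((frequently_cofinite_iff_infinite.2 hc).and_eventually
      ((eventually_cofinite_ne j₀).and (htend.eventually_lt_atBot M))).exists.imp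
      fun k ⟨hk, hne, hkM⟩ => ⟨hk, hne, hk ▸ hkM⟩
  set u := lam j₀ / c
  have hlam : lam j₀ = u * c := (div_mul_cancel₀ _ hc0).symm
  have hu_le : u - 1 ≤ 0 := by
    refine nonpos_of_forall_exists_lt_le_mul (C := C + (u - 1) * (c * d j₀)) fun M => ?_
    obtain ⟨k, hk, hkj, hkM⟩ := hfar M
    refine ⟨c * d k, hkM, ?_⟩
    have := hC _ _ (isEvenSign_signOf (F := ∅) (by simp)) (IsFinPerm.swap j₀ k)
    rw [energyB_swap hkj.symm fun i _ _ => signOf_of_notMem (Finset.notMem_empty i),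
      signOf_of_notMem (Finset.notMem_empty _), signOf_of_notMem (Finset.notMem_empty _), hk,
      hlam] at this
    linarith
  have hu_ge : -(u + 1) ≤ 0 := by
    refine nonpos_of_forall_exists_lt_le_mul (C := C + (u + 1) * (c * d j₀)) fun M => ?_
    obtain ⟨k, hk, hkj, hkM⟩ := hfar M
    refine ⟨c * d k, hkM, ?_⟩
    have := hC _ _ (isEvenSign_signOf (F := {j₀, k}) (Finset.card_pair hkj.symm ▸ even_two))
      (IsFinPerm.swap j₀ k)
    rw [energyB_swap hkj.symm fun i h₁ h₂ => signOf_of_notMem (by simp [h₁, h₂])] at this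
    rw [signOf_of_mem (by simp), signOf_of_mem (by simp), hk, hlam] at this
    linarith
  calc |lam j₀| = |u| * |c| := by rw [hlam, abs_mul]
    _ ≤ |c| := mul_le_of_le_one_left (abs_nonneg c) (abs_le.2 ⟨by linarith, by linarith⟩)

lemma pecB_of_abs_le_of_finite_ne_neg_mul_abs {lam d : J → ℝ} (a : ℝ)
    (hle : ∀ j, |lam j| ≤ a) (hF : {j | lam j * d j ≠ -(a * |d j|)}.Finite) : PECB lam d := by
  classical
  set g : J → ℝ := fun j => a * |d j| + lam j * d j
  have hg : ∀ j, 0 ≤ g j := fun j => by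
    have := mul_le_mul_of_nonneg_right (hle j) (abs_nonneg (d j))
    linarith [neg_abs_le (lam j * d j), abs_mul (lam j) (d j)]
  set F := hF.toFinset
  have hgF : ∀ j ∉ F, g j = 0 := fun j hj => by
    simp only [F, Set.Finite.mem_toFinset, Set.mem_ofPred_eq, not_not] at hj
    simp only [g, hj]
    ring
  refine ⟨-∑ j ∈ F, g j, fun σ w hσ hw => ?_⟩
  set S := hσ.2.toFinset ∪ hw.toFinset
  have hwS : {j | w j ≠ j} ⊆ S := fun j hj => Finset.mem_union_right _ (hw.mem_toFinset.2 hj)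
  have hperm : ∑ j ∈ S, a * |d (w j)| = ∑ j ∈ S, a * |d j| :=
    w.sum_comp S (fun i => a * |d i|) hwS
  have hterm : ∀ j, a * |d j| - a * |d (w j)| - g j ≤ lam j * (σ j * d (w j) - d j) :=
    fun j => by
    have : |lam j * σ j * d (w j)| ≤ a * |d (w j)| := by
      rw [abs_mul, abs_mul, hσ.abs_eq_one, mul_one]
      exact mul_le_mul_of_nonneg_right (hle j) (abs_nonneg _)
    linarith [neg_abs_le (lam j * σ j * d (w j))]
  calc -∑ j ∈ F, g j = -∑ j ∈ S ∪ F, g j := by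
        rw [Finset.sum_subset Finset.subset_union_right fun j _ hj => hgF j hj]
    _ ≤ -∑ j ∈ S, g j := neg_le_neg
        (Finset.sum_le_sum_of_subset_of_nonneg Finset.subset_union_left fun j _ _ => hg j)
    _ = ∑ j ∈ S, (a * |d j| - a * |d (w j)| - g j) := by
        rw [Finset.sum_sub_distrib, Finset.sum_sub_distrib, hperm]
        ring
    _ ≤ ∑ j ∈ S, lam j * (σ j * d (w j) - d j) := Finset.sum_le_sum fun j _ => hterm j
    _ = energyB lam d σ w := by
        refine (energyB_eq_sum S (fun j hj => ?_) fun j hj => ?_).symm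
        · by_contra h
          exact hj (Finset.mem_union_left _ (hσ.2.mem_toFinset.2 h))
        · by_contra h
          exact hj (hwS h)

theorem pecB_of_pecD_of_tendsto_atBot [Infinite J] {lam d : J → ℝ}
    (hfin : (Set.range lam).Finite) (hD : PECD lam d)
    (htend : Tendsto (fun j => lam j * d j) cofinite atBot) : PECB lam d := by
  obtain ⟨c, hc⟩ : ∃ c, {j | lam j = c}.Infinite := by
    by_contra! h
    refine Set.infinite_univ (α := J) ?_
    rw [← Set.preimage_range lam]
    exact hfin.preimage' fun b _ => h b
  have hle : ∀ j, |lam j| ≤ |c| := abs_le_abs_of_infinite_fiber hD htend hc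
  have habs : {j | |lam j| ≠ |c|}.Finite := by
    refine (hfin.inter_of_left {b | |b| ≠ |c|}).preimage' (fun b hb => ?_) |>.subset
      fun j hj => ⟨⟨j, rfl⟩, hj⟩
    obtain ⟨⟨j, rfl⟩, hjc⟩ := hb
    by_contra hinf
    obtain ⟨i, hi⟩ := hc.nonempty
    have := abs_le_abs_of_infinite_fiber hD htend (Set.not_finite.1 hinf) i
    rw [show lam i = c from hi] at this
    exact hjc (le_antisymm (hle j) this)
  have hpos : {j | 0 < lam j * d j}.Finite := by
    simpa only [not_le] using eventually_cofinite.1 (tendsto_atBot.1 htend 0)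
  refine pecB_of_abs_le_of_finite_ne_neg_mul_abs |c| hle
    ((habs.union hpos).subset fun j hj => ?_)
  by_contra! h
  simp only [Set.mem_union, Set.mem_ofPred_eq, not_or, not_not, not_lt] at h hj
  rw [← h.1, ← abs_mul, abs_of_nonpos h.2, neg_neg] at hj
  exact hj rfl

end

theorem pecD_iff_pecB (J : Type*) [Infinite J] (lam d : J → ℝ)
    (hfin : (Set.range lam).Finite) :
    PECD lam d ↔ PECB lam d := by
  refine ⟨fun hD => ?_, fun ⟨C, hC⟩ => ⟨C, fun σ w hσ hw => hC σ w hσ.1 hw⟩⟩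
  by_cases htend : Tendsto (fun j => lam j * d j) cofinite atBot
  · exact pecB_of_pecD_of_tendsto_atBot hfin hD htend
  · obtain ⟨M, hM⟩ : ∃ M, {j | M < lam j * d j}.Infinite := by
      simpa only [tendsto_atBot, eventually_cofinite, not_le, not_forall, Set.Infinite] using htend
    exact pecB_of_pecD_of_infinite hD hM
end

section
/- Let $J$ be an infinite set and $\lambda=(\lambda_j),\chi=(d_j)\in\mathbb{R}^J$ satisfy the positive energy condition for $W(A_J)$. Let $m<n$ be reals and $r\in\mathbb{R}$. If $J_m^{<r}=\{j:\lambda_j=m,\ d_j<r\}$ and $J_n^{>r}=\{j:\lambda_j=n,\ d_j>r\}$ are both infinite, then $\sum_{j\in J_m^{<r}}(r-d_j)<\infty$ and $\sum_{j\in J_n^{>r}}(d_j-r)<\infty$. -/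
/-! Take finite `F ⊆ J_m^{<r}` and `G ⊆ J_n^{>r}` of the same size, and a bijection `e : F ≃ G`.
The finitely supported involution exchanging each `x ∈ F` with `e x` has energy
`∑ₓ (m - n) (d_{e x} - dₓ) = -(n - m) (∑_F (r - d) + ∑_G (d - r))`, so the positive energy
condition bounds `∑_F (r - d) + ∑_G (d - r)` uniformly. As `J_n^{>r}` is infinite, every finite
`F` has such a partner `G`, so the partial sums of `r - d` over `J_m^{<r}` are bounded; symmetrically
for `d - r` over `J_n^{>r}`. -/

open scoped BigOperators

open Equiv Finset

section

variable {J : Type*}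

theorem exists_perm_exchange_s17 {s t : Set J} (hst : Disjoint s t) (e : s ≃ t) :
    ∃ w : Perm J, (∀ x : s, w x = e x) ∧ (∀ y : t, w y = e.symm y) ∧ ∀ j ∉ s ∪ t, w j = j := by
  classical
  let u := Equiv.Set.union hst
  let σ : Perm (s ⊕ t) := (sumComm s t).trans (sumCongr e.symm e)
  refine ⟨Perm.ofSubtype (u.symm.permCongr σ), fun x => ?_, fun y => ?_,
    fun j hj => Perm.ofSubtype_apply_of_not_mem _ hj⟩
  · rw [Perm.ofSubtype_apply_of_mem _ (Set.mem_union_left t x.2), permCongr_apply, symm_symm,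
      Equiv.Set.union_apply_left hst x.2]
    simp [σ, u]
  · rw [Perm.ofSubtype_apply_of_mem _ (Set.mem_union_right s y.2), permCongr_apply, symm_symm,
      Equiv.Set.union_apply_right hst y.2]
    simp [σ, u]

theorem energyA_eq_sum_of_forall_notMem (lam d : J → ℝ) {w : Perm J} {s : Finset J}
    (hw : ∀ j ∉ s, w j = j) : energyA lam d w = ∑ j ∈ s, lam j * (d (w j) - d j) :=
  finsum_eq_finsetSum_of_support_subset _ fun j hj => by
    by_contra hjs
    simp [hw j hjs] at hj

theorem exists_isFinPerm_energyA_eq [DecidableEq J] (lam d : J → ℝ) {F G : Finset J}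
    (hFG : Disjoint F G) (e : F ≃ G) :
    ∃ w : Perm J, IsFinPerm w ∧
      energyA lam d w = ∑ x : F, (lam x - lam (e x)) * (d (e x) - d x) := by
  obtain ⟨w, hwF, hwG, hw⟩ := exists_perm_exchange_s17 (Finset.disjoint_coe.2 hFG) e
  have hw' : ∀ j ∉ F ∪ G, w j = j := fun j hj => hw j (by simpa using hj)
  refine ⟨w, (F ∪ G).finite_toSet.subset fun j hj => ?_, ?_⟩
  · by_contra hjFG
    exact hj (hw' j hjFG)
  rw [energyA_eq_sum_of_forall_notMem lam d hw', sum_union hFG, ← sum_coe_sort F,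
    ← sum_coe_sort G, ← e.sum_comp, ← sum_add_distrib]
  refine sum_congr rfl fun x _ => ?_
  rw [hwF x, hwG (e x), e.symm_apply_apply]
  ring

theorem PECA.exchange_bound {lam d : J → ℝ} (hpec : PECA lam d) :
    ∃ c, ∀ {m n r : ℝ} (F G : Finset J), ↑F ⊆ {j | lam j = m ∧ d j < r} →
      ↑G ⊆ {j | lam j = n ∧ r < d j} → F.card = G.card →
      (n - m) * (∑ j ∈ F, (r - d j) + ∑ j ∈ G, (d j - r)) ≤ c := by
  classical
  obtain ⟨C, hC⟩ := hpec
  refine ⟨-C, fun {m n r} F G hF hG hcard => ?_⟩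
  have hFG : Disjoint F G :=
    disjoint_left.2 fun j hjF hjG => lt_asymm (hF hjF).2 (hG hjG).2
  let e := F.equivOfCardEq hcard
  obtain ⟨w, hw, henergy⟩ := exists_isFinPerm_energyA_eq lam d hFG e
  have : energyA lam d w = -((n - m) * (∑ j ∈ F, (r - d j) + ∑ j ∈ G, (d j - r))) := by
    rw [henergy, ← sum_coe_sort F, ← sum_coe_sort G, ← e.sum_comp, ← sum_add_distrib, mul_sum,
      ← sum_neg_distrib]
    refine sum_congr rfl fun x _ => ?_
    rw [(hF x.2).1, (hG (e x).2).1]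
    ring
  linarith [hC w hw]

theorem summable_of_sum_add_sum_le {A B : Set J} {f g : J → ℝ}
    (hf : ∀ j ∈ A, 0 ≤ f j) (hg : ∀ j ∈ B, 0 ≤ g j) (hB : B.Infinite) {c : ℝ}
    (h : ∀ F G : Finset J, ↑F ⊆ A → ↑G ⊆ B → F.card = G.card →
      ∑ j ∈ F, f j + ∑ j ∈ G, g j ≤ c) :
    Summable fun j : A => f j := by
  refine summable_of_sum_le (c := c) (fun j => hf j j.2) fun u => ?_
  obtain ⟨G, hGB, hcard⟩ := hB.exists_subset_card_eq u.card
  have hu := h (u.map (Function.Embedding.subtype _)) G (by simp) hGB (by rw [card_map, hcard])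
  simp only [sum_map, Function.Embedding.coe_subtype] at hu
  linarith [sum_nonneg fun j hj => hg j (hGB hj)]

end

theorem pecA_both_infinite_summable_general (J : Type*) (lam d : J → ℝ)
    (hpec : PECA lam d) (m n r : ℝ) (hmn : m < n)
    (h1 : {j | lam j = m ∧ d j < r}.Infinite)
    (h2 : {j | lam j = n ∧ r < d j}.Infinite) :
    (Summable fun j : {j : J // lam j = m ∧ d j < r} => r - d j.1) ∧
    (Summable fun j : {j : J // lam j = n ∧ r < d j} => d j.1 - r) := by
  obtain ⟨c, hc⟩ := hpec.exchange_bound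
  have hbound : ∀ F G : Finset J, ↑F ⊆ {j | lam j = m ∧ d j < r} →
      ↑G ⊆ {j | lam j = n ∧ r < d j} → F.card = G.card →
      ∑ j ∈ F, (r - d j) + ∑ j ∈ G, (d j - r) ≤ c / (n - m) := fun F G hF hG hcard =>
    (le_div_iff₀' (sub_pos.2 hmn)).2 (hc F G hF hG hcard)
  have hlow : ∀ j ∈ {j | lam j = m ∧ d j < r}, 0 ≤ r - d j := fun j hj => (sub_pos.2 hj.2).le
  have hhigh : ∀ j ∈ {j | lam j = n ∧ r < d j}, 0 ≤ d j - r := fun j hj => (sub_pos.2 hj.2).le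
  exact ⟨summable_of_sum_add_sum_le hlow hhigh h2 hbound,
    summable_of_sum_add_sum_le hhigh hlow h1 fun G F hG hF hcard =>
      (add_comm _ _).trans_le (hbound F G hF hG hcard.symm)⟩

theorem pecA_both_infinite_summable (J : Type*) [Infinite J] (lam d : J → ℝ)
    (hpec : PECA lam d) (m n r : ℝ) (hmn : m < n)
    (h1 : {j | lam j = m ∧ d j < r}.Infinite)
    (h2 : {j | lam j = n ∧ r < d j}.Infinite) :
    (Summable fun j : {j : J // lam j = m ∧ d j < r} => r - d j.1) ∧
    (Summable fun j : {j : J // lam j = n ∧ r < d j} => d j.1 - r) :=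
  pecA_both_infinite_summable_general J lam d hpec m n r hmn h1 h2
end
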